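/- The area of the intersection of two disks of equal radius r₁ whose centers are at distance r apart, with 0 ≤ r ≤ 2r₁, equals 2r₁² arccos(r/(2r₁)) − (r/2)·√(4r₁² − r²). -/

import Mathlib

set_option maxHeartbeats 1000000

open MeasureTheory Real intervalIntegral

private lemma key_integral (r₁ r : ℝ) (hr₁ : 0 < r₁) (hr : 0 ≤ r) (hr2 : r ≤ 2 * r₁) :
    ∫ u in (r/2)..r₁, Real.sqrt (r₁ ^ 2 - u ^ 2)
      = (2 * r₁ ^ 2 * arccos (r / (2 * r₁)) - r / 2 * Real.sqrt (4 * r₁ ^ 2 - r ^ 2)) / 4 := by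
  have h2r₁ : (0:ℝ) < 2 * r₁ := by linarith
  have ht0 : 0 ≤ r / (2 * r₁) := div_nonneg hr h2r₁.le
  have ht1 : r / (2 * r₁) ≤ 1 := (div_le_one h2r₁).2 hr2
  set t := r / (2 * r₁) with htdef
  set α := arcsin t with hαdef
  have hα0 : 0 ≤ α := arcsin_nonneg.2 ht0
  have hα2 : α ≤ π / 2 := arcsin_le_pi_div_two t
  have hsin : Real.sin α = t := sin_arcsin (by linarith) ht1
  have hcos : Real.cos α = Real.sqrt (1 - t ^ 2) := by
    rw [hαdef, cos_arcsin]
  have hsub : ∫ x in α..(π/2), Real.sqrt (r₁ ^ 2 - (r₁ * Real.sin x) ^ 2) * (r₁ * Real.cos x)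
      = ∫ u in (r₁ * Real.sin α)..(r₁ * Real.sin (π/2)), Real.sqrt (r₁ ^ 2 - u ^ 2) := by
    have := integral_comp_mul_deriv (a := α) (b := π/2)
      (f := fun θ => r₁ * Real.sin θ) (f' := fun θ => r₁ * Real.cos θ)
      (g := fun u => Real.sqrt (r₁ ^ 2 - u ^ 2))
      (fun x _ => (Real.hasDerivAt_sin x).const_mul r₁)
      ((continuous_const.mul Real.continuous_cos).continuousOn)
      (Real.continuous_sqrt.comp (continuous_const.sub (continuous_pow 2)))
    simpa [Function.comp] using this
  have hb1 : r₁ * Real.sin α = r / 2 := by rw [hsin, htdef]; field_simp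
  have hb2 : r₁ * Real.sin (π/2) = r₁ := by rw [Real.sin_pi_div_two, mul_one]
  rw [hb1, hb2] at hsub
  rw [← hsub]
  have hcongr : ∫ x in α..(π/2), Real.sqrt (r₁ ^ 2 - (r₁ * Real.sin x) ^ 2) * (r₁ * Real.cos x)
      = ∫ x in α..(π/2), r₁ ^ 2 * Real.cos x ^ 2 := by
    apply integral_congr
    intro x hx
    rw [Set.uIcc_of_le hα2] at hx
    have hcx : 0 ≤ Real.cos x := Real.cos_nonneg_of_mem_Icc ⟨by linarith [hx.1], by linarith [hx.2]⟩
    have h1 : r₁ ^ 2 - (r₁ * Real.sin x) ^ 2 = (r₁ * Real.cos x) ^ 2 := by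
      have := Real.sin_sq_add_cos_sq x; nlinarith
    show Real.sqrt (r₁ ^ 2 - (r₁ * Real.sin x) ^ 2) * (r₁ * Real.cos x) = r₁ ^ 2 * Real.cos x ^ 2
    rw [h1, Real.sqrt_sq (by positivity)]
    ring
  rw [hcongr, intervalIntegral.integral_const_mul, integral_cos_sq]
  rw [Real.cos_pi_div_two, Real.sin_pi_div_two, hsin, hcos]
  have harccos : arccos t = π / 2 - α := by rw [Real.arccos, hαdef]
  have hsq : Real.sqrt (1 - t ^ 2) = Real.sqrt (4 * r₁ ^ 2 - r ^ 2) / (2 * r₁) := by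
    have h : 1 - t ^ 2 = (4 * r₁ ^ 2 - r ^ 2) / (2 * r₁) ^ 2 := by
      rw [htdef]; field_simp; ring
    rw [h, Real.sqrt_div (by nlinarith), Real.sqrt_sq h2r₁.le]
  rw [harccos, hsq, htdef]
  field_simp [hr₁.ne']
  ring

private lemma volume_sq_le (c : ℝ) :
    volume {y : ℝ | y ^ 2 ≤ c} = ENNReal.ofReal (2 * Real.sqrt c) := by
  rcases le_or_gt 0 c with hc | hc
  · have h : {y : ℝ | y ^ 2 ≤ c} = Set.Icc (-Real.sqrt c) (Real.sqrt c) := by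
      ext y
      simp only [Set.mem_setOf_eq, Set.mem_Icc, ← abs_le]
      rw [← Real.sqrt_sq_eq_abs, Real.sqrt_le_sqrt_iff hc]
    rw [h, Real.volume_Icc]
    congr 1; ring
  · have h : {y : ℝ | y ^ 2 ≤ c} = ∅ := by
      ext y; simp only [Set.mem_setOf_eq, Set.mem_empty_iff_false, iff_false, not_le]
      nlinarith [sq_nonneg y]
    rw [h, measure_empty, Real.sqrt_eq_zero_of_nonpos hc.le]
    simp

private lemma areaT (r₁ r : ℝ) (hr₁ : 0 < r₁) (hr : 0 ≤ r) (hr2 : r ≤ 2 * r₁) :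
    volume {p : ℝ × ℝ | p.1 ^ 2 + p.2 ^ 2 ≤ r₁ ^ 2 ∧ (p.1 - r) ^ 2 + p.2 ^ 2 ≤ r₁ ^ 2}
      = ENNReal.ofReal (2 * r₁ ^ 2 * arccos (r / (2 * r₁))
          - r / 2 * Real.sqrt (4 * r₁ ^ 2 - r ^ 2)) := by
  have hle : r - r₁ ≤ r₁ := by linarith
  have hle1 : r - r₁ ≤ r / 2 := by linarith
  have hle2 : r / 2 ≤ r₁ := by linarith
  set c : ℝ → ℝ := fun x => min (r₁ ^ 2 - x ^ 2) (r₁ ^ 2 - (x - r) ^ 2) with hcdef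
  set g : ℝ → ℝ := fun x => 2 * Real.sqrt (c x) with hgdef
  have hccont : Continuous c := ((continuous_const.sub (continuous_pow 2)).min
    (continuous_const.sub (((continuous_id.sub continuous_const).pow 2))))
  have hgcont : Continuous g := continuous_const.mul (Real.continuous_sqrt.comp hccont)
  have hgnn : ∀ x, 0 ≤ g x := fun x => by positivity
  have hsupp : ∀ x ∉ Set.Icc (r - r₁) r₁, g x = 0 := by
    intro x hx
    rw [Set.mem_Icc, not_and_or, not_le, not_le] at hx
    have hcx : c x ≤ 0 := by
      rcases hx with hx | hx
      · exact le_trans (min_le_right _ _) (by nlinarith)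
      · exact le_trans (min_le_left _ _) (by nlinarith)
    simp [hgdef, Real.sqrt_eq_zero_of_nonpos hcx]
  have hint : Integrable g := by
    apply hgcont.integrable_of_hasCompactSupport
    exact HasCompactSupport.intro isCompact_Icc hsupp
  set T : Set (ℝ × ℝ) := {p : ℝ × ℝ | p.1 ^ 2 + p.2 ^ 2 ≤ r₁ ^ 2 ∧ (p.1 - r) ^ 2 + p.2 ^ 2 ≤ r₁ ^ 2} with hTdef
  have hT : MeasurableSet T := by
    have h1 : MeasurableSet {p : ℝ × ℝ | p.1 ^ 2 + p.2 ^ 2 ≤ r₁ ^ 2} :=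
      measurableSet_le (by fun_prop) measurable_const
    have h2 : MeasurableSet {p : ℝ × ℝ | (p.1 - r) ^ 2 + p.2 ^ 2 ≤ r₁ ^ 2} :=
      measurableSet_le (by fun_prop) measurable_const
    exact h1.inter h2
  rw [Measure.volume_eq_prod, Measure.prod_apply hT]
  have hfib : ∀ x : ℝ, volume (Prod.mk x ⁻¹' T) = ENNReal.ofReal (g x) := by
    intro x
    have : Prod.mk x ⁻¹' T = {y : ℝ | y ^ 2 ≤ c x} := by
      ext y
      simp only [Set.mem_preimage, hTdef, Set.mem_setOf_eq, hcdef, le_min_iff]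
      constructor
      · rintro ⟨h1, h2⟩; exact ⟨by linarith, by linarith⟩
      · rintro ⟨h1, h2⟩; exact ⟨by linarith, by linarith⟩
    rw [this, volume_sq_le]
  simp_rw [hfib]
  rw [← ofReal_integral_eq_lintegral_ofReal hint (Filter.Eventually.of_forall hgnn)]
  congr 1
  rw [← setIntegral_eq_integral_of_forall_compl_eq_zero hsupp]
  rw [integral_Icc_eq_integral_Ioc, ← intervalIntegral.integral_of_le hle]
  have hi1 : IntervalIntegrable g volume (r - r₁) (r / 2) := hgcont.intervalIntegrable _ _
  have hi2 : IntervalIntegrable g volume (r / 2) r₁ := hgcont.intervalIntegrable _ _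
  rw [← intervalIntegral.integral_add_adjacent_intervals hi1 hi2]
  have hpart2 : ∫ x in (r/2)..r₁, g x = ∫ x in (r/2)..r₁, 2 * Real.sqrt (r₁ ^ 2 - x ^ 2) := by
    apply integral_congr
    intro x hx
    rw [Set.uIcc_of_le hle2] at hx
    have : c x = r₁ ^ 2 - x ^ 2 := min_eq_left (by nlinarith [hx.1, hx.2])
    simp [hgdef, this]
  have hpart1 : ∫ x in (r - r₁)..(r/2), g x = ∫ x in (r/2)..r₁, 2 * Real.sqrt (r₁ ^ 2 - x ^ 2) := by
    have e1 : ∫ x in (r - r₁)..(r/2), g x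
        = ∫ x in (r - r₁)..(r/2), (fun u => 2 * Real.sqrt (r₁ ^ 2 - u ^ 2)) (x - r) := by
      apply integral_congr
      intro x hx
      rw [Set.uIcc_of_le hle1] at hx
      have : c x = r₁ ^ 2 - (x - r) ^ 2 := min_eq_right (by nlinarith [hx.1, hx.2])
      simp [hgdef, this]
    rw [e1, intervalIntegral.integral_comp_sub_right (fun u => 2 * Real.sqrt (r₁ ^ 2 - u ^ 2)) r]
    have e2 : r - r₁ - r = -r₁ := by ring
    have e3 : r / 2 - r = -(r/2) := by ring
    rw [e2, e3]
    have e4 : ∫ x in (-r₁)..(-(r/2)), 2 * Real.sqrt (r₁ ^ 2 - x ^ 2)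
        = ∫ x in (-r₁)..(-(r/2)), (fun u => 2 * Real.sqrt (r₁ ^ 2 - u ^ 2)) (-x) := by
      apply integral_congr
      intro x _
      simp [neg_sq]
    rw [e4, intervalIntegral.integral_comp_neg (fun u => 2 * Real.sqrt (r₁ ^ 2 - u ^ 2))]
    simp
  rw [hpart1, hpart2, intervalIntegral.integral_const_mul,
    key_integral r₁ r hr₁ hr hr2]
  ring

/-- The area of the intersection of two disks in `ℝ²` of equal radius `r₁` whose centers
are at distance `r` apart (`0 ≤ r ≤ 2r₁`) is
`2r₁² arccos(r/(2r₁)) − (r/2)√(4r₁² − r²)`. -/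
theorem stmt8 (r₁ r : ℝ) (hr₁ : 0 < r₁) (hr : 0 ≤ r) (hr2 : r ≤ 2 * r₁)
    (c₁ c₂ : EuclideanSpace ℝ (Fin 2)) (hdist : dist c₁ c₂ = r) :
    volume (Metric.closedBall c₁ r₁ ∩ Metric.closedBall c₂ r₁)
      = ENNReal.ofReal (2 * r₁ ^ 2 * arccos (r / (2 * r₁))
          - r / 2 * Real.sqrt (4 * r₁ ^ 2 - r ^ 2)) := by
  set w : EuclideanSpace ℝ (Fin 2) := EuclideanSpace.single 0 r with hwdef
  have hnw : ‖w‖ = r := by simp [hwdef, EuclideanSpace.norm_single, abs_of_nonneg hr]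
  have hvw : ‖c₂ - c₁‖ = ‖w‖ := by rw [hnw, ← hdist, dist_eq_norm']
  set e := Submodule.reflection (ℝ ∙ (c₂ - c₁ - w))ᗮ with hedef
  have he : e (c₂ - c₁) = w := Submodule.reflection_sub hvw
  have hset : Metric.closedBall c₁ r₁ ∩ Metric.closedBall c₂ r₁
      = (⇑e ∘ (· - c₁)) ⁻¹' (Metric.closedBall 0 r₁ ∩ Metric.closedBall w r₁) := by
    ext x
    simp only [Set.mem_inter_iff, Set.mem_preimage, Metric.mem_closedBall, Function.comp_apply]
    have h1 : dist (e (x - c₁)) 0 = dist x c₁ := by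
      rw [dist_zero_right, e.norm_map, ← dist_eq_norm]
    have h2 : dist (e (x - c₁)) w = dist x c₂ := by
      rw [← he, e.dist_map, dist_eq_norm]
      rw [sub_sub_sub_cancel_right, ← dist_eq_norm]
    rw [h1, h2]
  rw [hset, Set.preimage_comp]
  have hmeas : MeasurableSet
      (Metric.closedBall (0 : EuclideanSpace ℝ (Fin 2)) r₁ ∩ Metric.closedBall w r₁) :=
    measurableSet_closedBall.inter measurableSet_closedBall
  have hstep1 : volume ((fun x => x - c₁) ⁻¹' (⇑e ⁻¹' (Metric.closedBall 0 r₁ ∩ Metric.closedBall w r₁)))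
      = volume (⇑e ⁻¹' (Metric.closedBall 0 r₁ ∩ Metric.closedBall w r₁)) := by
    simpa [sub_eq_add_neg] using measure_preimage_add_right volume (-c₁)
      (⇑e ⁻¹' (Metric.closedBall 0 r₁ ∩ Metric.closedBall w r₁))
  rw [hstep1, e.measurePreserving.measure_preimage hmeas.nullMeasurableSet]
  -- transfer to ℝ × ℝ
  have hpre : Metric.closedBall (0 : EuclideanSpace ℝ (Fin 2)) r₁ ∩ Metric.closedBall w r₁
      = (⇑MeasurableEquiv.finTwoArrow ∘ ⇑(MeasurableEquiv.toLp 2 (Fin 2 → ℝ)).symm) ⁻¹'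
        {p : ℝ × ℝ | p.1 ^ 2 + p.2 ^ 2 ≤ r₁ ^ 2 ∧ (p.1 - r) ^ 2 + p.2 ^ 2 ≤ r₁ ^ 2} := by
    ext x
    have hd0 : dist x 0 = Real.sqrt (x 0 ^ 2 + x 1 ^ 2) := by
      rw [EuclideanSpace.dist_eq, Fin.sum_univ_two]
      norm_num [Real.dist_eq]
    have hdw : dist x w = Real.sqrt ((x 0 - r) ^ 2 + x 1 ^ 2) := by
      rw [EuclideanSpace.dist_eq, Fin.sum_univ_two, hwdef]
      norm_num [Real.dist_eq, EuclideanSpace.single_apply]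
    simp only [Set.mem_inter_iff, Metric.mem_closedBall, Set.mem_preimage, Function.comp_apply,
      Set.mem_setOf_eq, hd0, hdw]
    have key : ∀ s : ℝ, 0 ≤ s → (Real.sqrt s ≤ r₁ ↔ s ≤ r₁ ^ 2) := by
      intro s hs
      rw [← Real.sqrt_sq hr₁.le, Real.sqrt_le_sqrt_iff (sq_nonneg r₁), Real.sqrt_sq hr₁.le]
    rw [key _ (by positivity), key _ (by positivity)]
    rfl
  have hmp : MeasurePreserving
      (⇑MeasurableEquiv.finTwoArrow ∘ ⇑(MeasurableEquiv.toLp 2 (Fin 2 → ℝ)).symm)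
      volume volume :=
    (volume_preserving_finTwoArrow ℝ).comp (EuclideanSpace.volume_preserving_symm_measurableEquiv_toLp (Fin 2))
  have hTm : MeasurableSet {p : ℝ × ℝ | p.1 ^ 2 + p.2 ^ 2 ≤ r₁ ^ 2 ∧ (p.1 - r) ^ 2 + p.2 ^ 2 ≤ r₁ ^ 2} := by
    have h1 : MeasurableSet {p : ℝ × ℝ | p.1 ^ 2 + p.2 ^ 2 ≤ r₁ ^ 2} :=
      measurableSet_le (by fun_prop) measurable_const
    have h2 : MeasurableSet {p : ℝ × ℝ | (p.1 - r) ^ 2 + p.2 ^ 2 ≤ r₁ ^ 2} :=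
      measurableSet_le (by fun_prop) measurable_const
    exact h1.inter h2
  rw [hpre, hmp.measure_preimage hTm.nullMeasurableSet]
  exact areaT r₁ r hr₁ hr hr2
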